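/- arXiv:1801.09557 — 5 statements merged into one kernel-verified Lean document; each statement's English description precedes it below -/
import Mathlib

section
/- Let A ∈ ℝ^{n×n} and R = Rᵀ ∈ ℝ^{m×m} both be invertible and let B ∈ ℝ^{n×m}. A symmetric invertible matrix Q ∈ ℝ^{n×n} is a solution of the homogeneous algebraic Riccati equation Q = AᵀQA − AᵀQB(R + BᵀQB)^{−1}BᵀQA if and only if P := Q^{−1} is a (symmetric invertible) solution of the Stein equation A P Aᵀ − P = B R^{−1} Bᵀ. Consequently the map P ↦ P^{−1} is a bijection from the set of invertible symmetric solutions of the Stein equation onto the set of invertible symmetric solutions of the HARE. -/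
open Matrix Polynomial

/-- `S` is an `A`-invariant subspace. -/
def AInvariant {n : Type*} [Fintype n] (A : Matrix n n ℝ)
    (S : Submodule ℝ (n → ℝ)) : Prop :=
  ∀ x ∈ S, A.mulVec x ∈ S

/-- The pair `(A, B)` is reachable: the only `A`-invariant subspace containing
the column space of `B` is the whole space. -/
def Reachable {n m : Type*} [Fintype n] [Fintype m] (A : Matrix n n ℝ)
    (B : Matrix n m ℝ) : Prop :=
  ∀ S : Submodule ℝ (n → ℝ), AInvariant A S → LinearMap.range B.mulVecLin ≤ S → S = ⊤

/-- A real square matrix is unmixed if no two of its complex eigenvalues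
(roots of its characteristic polynomial over ℂ) multiply to 1. -/
def Unmixed {n : Type*} [Fintype n] [DecidableEq n] (A : Matrix n n ℝ) : Prop :=
  ∀ μ₁ μ₂ : ℂ, (A.map (algebraMap ℝ ℂ)).charpoly.IsRoot μ₁ →
    (A.map (algebraMap ℝ ℂ)).charpoly.IsRoot μ₂ → μ₁ * μ₂ ≠ 1

/-- `Q` is a (symmetric) solution of the homogeneous algebraic Riccati equation
`Q = AᵀQA − AᵀQB(R + BᵀQB)⁻¹BᵀQA` (with `R + BᵀQB` invertible). -/
def IsHARESol {n m : Type*} [Fintype n] [DecidableEq n] [Fintype m] [DecidableEq m]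
    (A : Matrix n n ℝ) (B : Matrix n m ℝ) (R : Matrix m m ℝ)
    (Q : Matrix n n ℝ) : Prop :=
  Q.IsSymm ∧ IsUnit (R + Bᵀ * Q * B) ∧
    Q = Aᵀ * Q * A - Aᵀ * Q * B * (R + Bᵀ * Q * B)⁻¹ * (Bᵀ * Q * A)

/-- `P` is a (symmetric) solution of the Stein equation `A P Aᵀ − P = B R⁻¹ Bᵀ`. -/
def IsSteinSol {n m : Type*} [Fintype n] [DecidableEq n] [Fintype m] [DecidableEq m]
    (A : Matrix n n ℝ) (B : Matrix n m ℝ) (R : Matrix m m ℝ)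
    (P : Matrix n n ℝ) : Prop :=
  P.IsSymm ∧ A * P * Aᵀ - P = B * R⁻¹ * Bᵀ

/-- `Pr` is the matrix of the orthogonal projection onto the subspace `S`. -/
def IsOrthProjOnto {n : Type*} [Fintype n] (S : Submodule ℝ (n → ℝ))
    (Pr : Matrix n n ℝ) : Prop :=
  Pr.IsSymm ∧ Pr * Pr = Pr ∧ LinearMap.range Pr.mulVecLin = S

/-- `X` is the Moore–Penrose pseudoinverse of `M` (the four Penrose conditions). -/
def IsMPPseudoinverse {n : Type*} [Fintype n] (M X : Matrix n n ℝ) : Prop :=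
  M * X * M = M ∧ X * M * X = X ∧ (M * X)ᵀ = M * X ∧ (X * M)ᵀ = X * M

theorem invertible_HARE_solutions_correspond_to_invertible_Stein_solutions
    {n m : ℕ} (A : Matrix (Fin n) (Fin n) ℝ) (B : Matrix (Fin n) (Fin m) ℝ)
    (R : Matrix (Fin m) (Fin m) ℝ)
    (hA : IsUnit A) (hR : IsUnit R) (hRsym : R.IsSymm) :
    (∀ Q : Matrix (Fin n) (Fin n) ℝ, Q.IsSymm → IsUnit Q →
      (IsHARESol A B R Q ↔ IsSteinSol A B R Q⁻¹)) ∧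
    Set.BijOn (fun P : Matrix (Fin n) (Fin n) ℝ => P⁻¹)
      {P | IsUnit P ∧ IsSteinSol A B R P}
      {Q | IsUnit Q ∧ IsHARESol A B R Q} := by
  have hAd : IsUnit A.det := (Matrix.isUnit_iff_isUnit_det A).mp hA
  have hRd : IsUnit R.det := (Matrix.isUnit_iff_isUnit_det R).mp hR
  have hAt : IsUnit Aᵀ.det := Matrix.isUnit_det_transpose A hAd
  have key : ∀ Q : Matrix (Fin n) (Fin n) ℝ, Q.IsSymm → IsUnit Q →
      (IsHARESol A B R Q ↔ IsSteinSol A B R Q⁻¹) := by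
    intro Q hQs hQ
    have hQd : IsUnit Q.det := (Matrix.isUnit_iff_isUnit_det Q).mp hQ
    have hQinv : IsUnit Q⁻¹ := Matrix.isUnit_nonsing_inv_iff.mpr hQ
    have hQinvd : IsUnit Q⁻¹.det := (Matrix.isUnit_iff_isUnit_det _).mp hQinv
    have hRinv : IsUnit R⁻¹ := Matrix.isUnit_nonsing_inv_iff.mpr hR
    have hQQ : Q⁻¹⁻¹ = Q := Matrix.nonsing_inv_nonsing_inv Q hQd
    have hRR : R⁻¹⁻¹ = R := Matrix.nonsing_inv_nonsing_inv R hRd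
    have hQsyminv : (Q⁻¹).IsSymm := by
      rw [Matrix.IsSymm, Matrix.transpose_nonsing_inv, hQs]
    -- specialization of the Woodbury identity
    have wood : IsUnit (R + Bᵀ * Q * B) →
        (Q⁻¹ + B * R⁻¹ * Bᵀ)⁻¹ = Q - Q * B * (R + Bᵀ * Q * B)⁻¹ * Bᵀ * Q := by
      intro hS
      have h := Matrix.add_mul_mul_inv_eq_sub Q⁻¹ B R⁻¹ Bᵀ hQinv hRinv
        (by rw [hRR, hQQ]; exact hS)
      rwa [hRR, hQQ] at h
    -- pure rearrangement identity
    have hre : Aᵀ * (Q - Q * B * (R + Bᵀ * Q * B)⁻¹ * Bᵀ * Q) * A =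
        Aᵀ * Q * A - Aᵀ * Q * B * (R + Bᵀ * Q * B)⁻¹ * (Bᵀ * Q * A) := by
      simp only [Matrix.sub_mul, Matrix.mul_sub, Matrix.mul_assoc]
    constructor
    · rintro ⟨-, hS, heq⟩
      have hw := wood hS
      have heq2 : Q = Aᵀ * (Q⁻¹ + B * R⁻¹ * Bᵀ)⁻¹ * A := by
        rw [hw, hre]; exact heq
      have hNinvU : IsUnit (Q⁻¹ + B * R⁻¹ * Bᵀ)⁻¹ := by
        rw [Matrix.isUnit_iff_isUnit_det]
        have hdet := congrArg Matrix.det heq2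
        rw [Matrix.det_mul, Matrix.det_mul] at hdet
        rw [hdet] at hQd
        exact ((Commute.all _ _).isUnit_mul_iff.mp
          ((Commute.all _ _).isUnit_mul_iff.mp hQd).1).2
      have hNU : IsUnit (Q⁻¹ + B * R⁻¹ * Bᵀ) := Matrix.isUnit_nonsing_inv_iff.mp hNinvU
      have hNd : IsUnit (Q⁻¹ + B * R⁻¹ * Bᵀ).det := (Matrix.isUnit_iff_isUnit_det _).mp hNU
      have hQinveq : Q⁻¹ = (Aᵀ * (Q⁻¹ + B * R⁻¹ * Bᵀ)⁻¹ * A)⁻¹ :=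
        congrArg (fun M : Matrix (Fin n) (Fin n) ℝ => M⁻¹) heq2
      rw [Matrix.mul_inv_rev, Matrix.mul_inv_rev,
        Matrix.nonsing_inv_nonsing_inv _ hNd] at hQinveq
      have hAQ : A * Q⁻¹ * Aᵀ = Q⁻¹ + B * R⁻¹ * Bᵀ := by
        conv_lhs => rw [hQinveq]
        simp only [Matrix.mul_assoc]
        rw [Matrix.nonsing_inv_mul Aᵀ hAt, Matrix.mul_one, ← Matrix.mul_assoc,
          Matrix.mul_nonsing_inv A hAd, Matrix.one_mul]
      refine ⟨hQsyminv, ?_⟩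
      rw [hAQ, add_sub_cancel_left]
    · rintro ⟨-, hstein⟩
      have hNeq : Q⁻¹ + B * R⁻¹ * Bᵀ = A * Q⁻¹ * Aᵀ := by
        rw [← hstein]; abel
      -- invertibility of R + BᵀQB
      have hS : IsUnit (R + Bᵀ * Q * B) := by
        rw [Matrix.isUnit_iff_isUnit_det]
        have h1 : R * (1 + R⁻¹ * Bᵀ * (Q * B)) = R + Bᵀ * Q * B := by
          rw [Matrix.mul_add, Matrix.mul_one, ← Matrix.mul_assoc R (R⁻¹ * Bᵀ) (Q * B),
            ← Matrix.mul_assoc R R⁻¹ Bᵀ, Matrix.mul_nonsing_inv R hRd, Matrix.one_mul,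
            ← Matrix.mul_assoc Bᵀ Q B]
        have h2 : (1 + R⁻¹ * Bᵀ * (Q * B)).det = (1 + Q * B * (R⁻¹ * Bᵀ)).det :=
          (Matrix.det_one_add_mul_comm (R⁻¹ * Bᵀ) (Q * B)).symm ▸ rfl
        have h3 : 1 + Q * B * (R⁻¹ * Bᵀ) = Q * (Q⁻¹ + B * R⁻¹ * Bᵀ) := by
          rw [Matrix.mul_add, Matrix.mul_nonsing_inv Q hQd]
          simp only [Matrix.mul_assoc]
        rw [← h1, Matrix.det_mul, h2, h3, hNeq, Matrix.det_mul, Matrix.det_mul,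
          Matrix.det_mul]
        exact hRd.mul (hQd.mul ((hAd.mul hQinvd).mul hAt))
      have hw := wood hS
      have hQeq : Aᵀ * (Q⁻¹ + B * R⁻¹ * Bᵀ)⁻¹ * A = Q := by
        rw [hNeq, Matrix.mul_inv_rev, Matrix.mul_inv_rev, hQQ, ← Matrix.mul_assoc,
          ← Matrix.mul_assoc, Matrix.mul_nonsing_inv Aᵀ hAt, Matrix.one_mul,
          Matrix.mul_assoc, Matrix.nonsing_inv_mul A hAd, Matrix.mul_one]
      refine ⟨hQs, hS, ?_⟩
      rw [← hre, ← hw, hQeq]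
  refine ⟨key, ?_, ?_, ?_⟩
  · rintro P ⟨hPU, hPst⟩
    have hPd : IsUnit P.det := (Matrix.isUnit_iff_isUnit_det P).mp hPU
    have hPinvU : IsUnit P⁻¹ := Matrix.isUnit_nonsing_inv_iff.mpr hPU
    have hPinvsym : (P⁻¹).IsSymm := by
      rw [Matrix.IsSymm, Matrix.transpose_nonsing_inv, hPst.1]
    refine ⟨hPinvU, ?_⟩
    exact (key P⁻¹ hPinvsym hPinvU).mpr
      (by rw [Matrix.nonsing_inv_nonsing_inv P hPd]; exact hPst)
  · rintro P ⟨hPU, -⟩ P' ⟨hPU', -⟩ h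
    simp only at h
    rw [← Matrix.nonsing_inv_nonsing_inv P ((Matrix.isUnit_iff_isUnit_det P).mp hPU), h,
      Matrix.nonsing_inv_nonsing_inv P' ((Matrix.isUnit_iff_isUnit_det P').mp hPU')]
  · rintro Q ⟨hQU, hQh⟩
    have hQd : IsUnit Q.det := (Matrix.isUnit_iff_isUnit_det Q).mp hQU
    exact ⟨Q⁻¹, ⟨Matrix.isUnit_nonsing_inv_iff.mpr hQU, (key Q hQh.1 hQU).mp hQh⟩,
      Matrix.nonsing_inv_nonsing_inv Q hQd⟩
end

section
/- Let A ∈ ℝ^{n×n}, B ∈ ℝ^{n×m} and R = Rᵀ ∈ ℝ^{m×m}, and let Q be any symmetric solution of the homogeneous algebraic Riccati equation Q = AᵀQA − AᵀQB(R + BᵀQB)^{−1}BᵀQA. Then ker(Q) is an A-invariant subspace of ℝⁿ, i.e. A·ker(Q) ⊆ ker(Q). -/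
open Matrix Polynomial

/-- If `ker N ≤ ker P` and `rank P ≤ rank N`, then the kernels coincide. -/
lemma ker_eq_of_ker_le_of_rank_le {n : ℕ} (N P : Matrix (Fin n) (Fin n) ℝ)
    (hker : LinearMap.ker N.mulVecLin ≤ LinearMap.ker P.mulVecLin)
    (hrank : N.rank ≤ P.rank) :
    LinearMap.ker N.mulVecLin = LinearMap.ker P.mulVecLin := by
  apply Submodule.eq_of_le_of_finrank_le hker
  have hN := LinearMap.finrank_range_add_finrank_ker N.mulVecLin
  have hP := LinearMap.finrank_range_add_finrank_ker P.mulVecLin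
  rw [Module.finrank_pi ℝ] at hN hP
  have hNr : Module.finrank ℝ (LinearMap.range N.mulVecLin) = N.rank := rfl
  have hPr : Module.finrank ℝ (LinearMap.range P.mulVecLin) = P.rank := rfl
  rw [hNr] at hN; rw [hPr] at hP
  omega

theorem kernel_of_HARE_solution_is_A_invariant
    {n m : ℕ} (A : Matrix (Fin n) (Fin n) ℝ) (B : Matrix (Fin n) (Fin m) ℝ)
    (R : Matrix (Fin m) (Fin m) ℝ) (Q : Matrix (Fin n) (Fin n) ℝ)
    (hRsym : R.IsSymm) (hQ : IsHARESol A B R Q) :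
    AInvariant A (LinearMap.ker Q.mulVecLin) := by
  obtain ⟨hQsym, hSunit, heq⟩ := hQ
  set S : Matrix (Fin m) (Fin m) ℝ := R + Bᵀ * Q * B with hSdef
  set M : Matrix (Fin n) (Fin n) ℝ := Q - Q * B * S⁻¹ * (Bᵀ * Q) with hMdef
  -- Q = Aᵀ M A
  have hQM : Q = Aᵀ * M * A := by
    rw [heq, hMdef]
    simp only [Matrix.mul_sub, Matrix.sub_mul, Matrix.mul_assoc]
  -- M = Q * C, so rank M ≤ rank Q
  have hMC : M = Q * (1 - B * S⁻¹ * (Bᵀ * Q)) := by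
    rw [hMdef]
    simp only [Matrix.mul_sub, Matrix.mul_one, Matrix.mul_assoc]
  have hrMQ : M.rank ≤ Q.rank := by
    rw [hMC]; exact Matrix.rank_mul_le_left _ _
  have hrQM : Q.rank ≤ M.rank := by
    calc Q.rank = (Aᵀ * M * A).rank := by rw [← hQM]
      _ ≤ (Aᵀ * M).rank := Matrix.rank_mul_le_left _ _
      _ ≤ M.rank := Matrix.rank_mul_le_right _ _
  -- ker Q ≤ ker M
  have hkerQM : LinearMap.ker Q.mulVecLin ≤ LinearMap.ker M.mulVecLin := by
    intro x hx
    rw [LinearMap.mem_ker, Matrix.mulVecLin_apply] at hx ⊢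
    have hM : M *ᵥ x = Q *ᵥ x - (Q * B * S⁻¹ * Bᵀ) *ᵥ (Q *ᵥ x) := by
      rw [hMdef, Matrix.sub_mulVec, Matrix.mulVec_mulVec]
      simp only [Matrix.mul_assoc]
    rw [hM, hx, Matrix.mulVec_zero, sub_zero]
  -- hence ker Q = ker M
  have hkerQM' : LinearMap.ker Q.mulVecLin = LinearMap.ker M.mulVecLin :=
    ker_eq_of_ker_le_of_rank_le Q M hkerQM hrQM
  -- ker (M*A) ≤ ker Q
  have hkerMAQ : LinearMap.ker (M * A).mulVecLin ≤ LinearMap.ker Q.mulVecLin := by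
    intro x hx
    rw [LinearMap.mem_ker, Matrix.mulVecLin_apply] at hx ⊢
    rw [hQM, Matrix.mul_assoc, ← Matrix.mulVec_mulVec, hx, Matrix.mulVec_zero]
  have hrMAQ : (M * A).rank ≤ Q.rank :=
    le_trans (Matrix.rank_mul_le_left _ _) hrMQ
  have hkerMAQ' : LinearMap.ker (M * A).mulVecLin = LinearMap.ker Q.mulVecLin :=
    ker_eq_of_ker_le_of_rank_le (M * A) Q hkerMAQ hrMAQ
  -- conclusion
  intro x hx
  have hx' : x ∈ LinearMap.ker (M * A).mulVecLin := by rw [hkerMAQ']; exact hx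
  rw [LinearMap.mem_ker, Matrix.mulVecLin_apply] at hx'
  rw [hkerQM', LinearMap.mem_ker, Matrix.mulVecLin_apply, Matrix.mulVec_mulVec, hx']
end

section
/- Let A ∈ ℝ^{n×n} be invertible, B ∈ ℝ^{n×m} with (A,B) reachable, and R ∈ ℝ^{m×m} symmetric positive definite. Let P be a symmetric solution of the Stein equation A P Aᵀ − P = B R^{−1} Bᵀ, let S be an A-invariant subspace of ℝⁿ, and let Π_S be the orthogonal projection matrix onto S. Then the Moore–Penrose pseudoinverse Q := [(I − Π_S) P (I − Π_S)]⁺ is symmetric, R + BᵀQB is invertible, and Q solves the homogeneous algebraic Riccati equation Q = AᵀQA − AᵀQB(R + BᵀQB)^{−1}BᵀQA. -/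
open Matrix Polynomial

/-!
Write `N = 1 - Pr` and `M = N P N`. The crux is that `M` is injective on the range of `N`,
i.e. on `Sᗮ`, which is `Aᵀ`-invariant. The Stein equation gives
`(Aᵀy)ᵀ P (Aᵀy) = yᵀ P y + (Bᵀy)ᵀ R⁻¹ (Bᵀy)`, so the quadratic form of `P` never decreases
along `Aᵀ`. A nonzero `x ∈ Sᗮ` with `M x = 0` is `P`-orthogonal to `Sᗮ`, while reachability makes
`P` positive at `(Aᵀ)ᵏ x` for some `k`; adjoining `x` to a subspace of `Sᗮ` on which `P` is
positive definite and pushing it forward by `(Aᵀ)ᵏ` then yields such subspaces of every dimension.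

Hence `Q M = M Q = N`, and the Penrose equations together with the `A`- and `A⁻¹`-invariance of
`S` turn the Stein equation into `Aᵀ Q = Q A⁻¹ (1 + B R⁻¹ Bᵀ Q)`. As `A` is invertible, so is
`1 + B R⁻¹ Bᵀ Q`, and the Woodbury identity turns this relation into the Riccati equation.
-/

namespace IsMPPseudoinverse

variable {ι : Type*} [Fintype ι] {M X Y : Matrix ι ι ℝ}

theorem unique (hX : IsMPPseudoinverse M X) (hY : IsMPPseudoinverse M Y) : X = Y := by
  obtain ⟨hX1, hX2, hX3, hX4⟩ := hX
  obtain ⟨hY1, hY2, hY3, hY4⟩ := hY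
  have hXMY : X = X * M * Y :=
    calc X = X * (M * X)ᵀ := by rw [hX3, ← Matrix.mul_assoc, hX2]
      _ = X * (M * Y * M * X)ᵀ := by rw [hY1]
      _ = X * (M * X)ᵀ * (M * Y)ᵀ := by simp only [transpose_mul, Matrix.mul_assoc]
      _ = X * M * Y := by rw [hX3, hY3, ← Matrix.mul_assoc X, hX2, Matrix.mul_assoc]
  have hYMY : Y = X * M * Y :=
    calc Y = (Y * M)ᵀ * Y := by rw [hY4, hY2]
      _ = (Y * (M * X * M))ᵀ * Y := by rw [hX1]
      _ = (X * M)ᵀ * (Y * M)ᵀ * Y := by simp only [transpose_mul, Matrix.mul_assoc]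
      _ = X * M * Y := by rw [hX4, hY4, Matrix.mul_assoc (X * M), hY2]
  rw [hXMY, ← hYMY]

theorem isSymm (hM : M.IsSymm) (hX : IsMPPseudoinverse M X) : X.IsSymm := by
  obtain ⟨h1, h2, h3, h4⟩ := hX
  refine (IsMPPseudoinverse.unique ⟨?_, ?_, ?_, ?_⟩ ⟨h1, h2, h3, h4⟩ : Xᵀ = X)
  · conv_rhs => rw [← hM.eq, ← h1]
    simp only [transpose_mul, hM.eq, Matrix.mul_assoc]
  · conv_rhs => rw [← h2]
    simp only [transpose_mul, hM.eq, Matrix.mul_assoc]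
  · rw [transpose_mul, transpose_transpose, hM.eq, ← h4, transpose_mul, hM.eq]
  · rw [transpose_mul, transpose_transpose, hM.eq, ← h3, transpose_mul, hM.eq]

theorem mul_eq_of_injOn {N : Matrix ι ι ℝ} (hX : IsMPPseudoinverse M X) (hM : M.IsSymm)
    (hNN : N * N = N) (hNM : N * M = M) (hMN : M * N = M)
    (hinj : ∀ x, N *ᵥ x = x → M *ᵥ x = 0 → x = 0) : X * M = N := by
  have hNXM : N * (X * M) = X * M := by
    rw [← hX.2.2.2, transpose_mul, hM.eq, ← Matrix.mul_assoc, hNM]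
  have hMXM : M * (N - X * M) = 0 := by
    rw [Matrix.mul_sub, hMN, ← Matrix.mul_assoc, hX.1, sub_self]
  refine (sub_eq_zero.1 (ext_iff_mulVec.2 fun v => ?_)).symm
  refine (hinj _ ?_ ?_).trans (zero_mulVec v).symm
  · rw [mulVec_mulVec, Matrix.mul_sub, hNN, hNXM]
  · rw [mulVec_mulVec, hMXM, zero_mulVec]

end IsMPPseudoinverse

theorem one_sub_mulVec_eq_self_iff {ι : Type*} [Fintype ι] [DecidableEq ι] {E : Matrix ι ι ℝ}
    {y : ι → ℝ} : (1 - E) *ᵥ y = y ↔ E *ᵥ y = 0 := by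
  rw [sub_mulVec, one_mulVec, sub_eq_self]

namespace AInvariant

variable {ι : Type*} [Fintype ι] [DecidableEq ι] {A : Matrix ι ι ℝ} {S : Submodule ℝ (ι → ℝ)}

theorem one_sub_mul_mul_eq_zero {E : Matrix ι ι ℝ} (hS : AInvariant A S) (hE : E * E = E)
    (hES : LinearMap.range E.mulVecLin = S) : (1 - E) * A * E = 0 := by
  refine ext_iff_mulVec.2 fun v => ?_
  obtain ⟨w, hw⟩ : A *ᵥ (E *ᵥ v) ∈ LinearMap.range E.mulVecLin :=
    hES ▸ hS _ (hES ▸ ⟨v, rfl⟩)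
  rw [zero_mulVec, ← mulVec_mulVec, ← mulVec_mulVec, ← hw, mulVecLin_apply, mulVec_mulVec,
    Matrix.sub_mul, Matrix.one_mul, hE, sub_self, zero_mulVec]

theorem inv (hA : IsUnit A) (hS : AInvariant A S) : AInvariant A⁻¹ S := by
  have hinj : Function.Injective A.mulVecLin := mulVec_injective_iff_isUnit.2 hA
  have hmap : S.map A.mulVecLin = S :=
    Submodule.eq_of_le_of_finrank_eq (by rintro _ ⟨y, hy, rfl⟩; exact hS y hy)
      (Submodule.equivMapOfInjective _ hinj S).finrank_eq.symm
  intro y hy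
  obtain ⟨z, hz, rfl⟩ := hmap.symm ▸ hy
  rwa [mulVecLin_apply, mulVec_mulVec, nonsing_inv_mul _ ((isUnit_iff_isUnit_det A).1 hA),
    one_mulVec]

theorem pow (hS : AInvariant A S) (k : ℕ) : AInvariant (A ^ k) S := by
  induction k with
  | zero => simp [AInvariant]
  | succ k ih =>
    intro x hx
    rw [pow_succ, ← mulVec_mulVec]
    exact ih _ (hS x hx)

theorem transpose_ker {E : Matrix ι ι ℝ} (hS : AInvariant A S) (hE : IsOrthProjOnto S E) :
    AInvariant Aᵀ (LinearMap.ker E.mulVecLin) := by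
  have hEAtE : E * Aᵀ * (1 - E) = 0 := by
    simpa only [transpose_mul, transpose_sub, transpose_one, hE.1.eq, transpose_zero,
      Matrix.mul_assoc] using congrArg transpose (hS.one_sub_mul_mul_eq_zero hE.2.1 hE.2.2)
  intro y (hy : E *ᵥ y = 0)
  change E *ᵥ (Aᵀ *ᵥ y) = 0
  rw [← one_sub_mulVec_eq_self_iff.2 hy, mulVec_mulVec, mulVec_mulVec, hEAtE, zero_mulVec]

end AInvariant

theorem Reachable.exists_mulVec_pow_ne_zero {ι κ : Type*} [Fintype ι] [DecidableEq ι]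
    [Fintype κ] {A : Matrix ι ι ℝ} {B : Matrix ι κ ℝ} (h : Reachable A B) {x : ι → ℝ}
    (hx : x ≠ 0) : ∃ j : ℕ, Bᵀ *ᵥ ((Aᵀ ^ j) *ᵥ x) ≠ 0 := by
  by_contra! hB
  let S : Submodule ℝ (ι → ℝ) :=
    { carrier := {z | ∀ j : ℕ, x ⬝ᵥ ((A ^ j) *ᵥ z) = 0}
      add_mem' := fun ha hb j => by rw [mulVec_add, dotProduct_add, ha j, hb j, add_zero]
      zero_mem' := fun j => by rw [mulVec_zero, dotProduct_zero]
      smul_mem' := fun c z hz j => by rw [mulVec_smul, dotProduct_smul, hz j, smul_zero] }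
  have hSA : AInvariant A S := fun z hz j => by
    rw [mulVec_mulVec, ← pow_succ]
    exact hz (j + 1)
  have hSB : LinearMap.range B.mulVecLin ≤ S := by
    rintro _ ⟨u, rfl⟩ j
    rw [mulVecLin_apply, mulVec_mulVec, dotProduct_mulVec, ← mulVec_transpose, transpose_mul,
      transpose_pow, ← mulVec_mulVec, hB j, zero_dotProduct]
  have hxS : x ∈ S := h S hSA hSB ▸ Submodule.mem_top
  exact hx (by simpa using hxS 0)

theorem mulVec_dotProduct_mulVec_mulVec {ι κ : Type*} [Fintype ι] [Fintype κ]
    (C : Matrix ι κ ℝ) (P : Matrix ι ι ℝ) (u v : κ → ℝ) :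
    (C *ᵥ u) ⬝ᵥ (P *ᵥ (C *ᵥ v)) = u ⬝ᵥ ((Cᵀ * P * C) *ᵥ v) := by
  rw [← mulVec_mulVec, ← mulVec_mulVec, dotProduct_transpose_mulVec, dotProduct_comm]

section Inertia

variable {ι : Type*} [Fintype ι]

def PosDefOn (P : Matrix ι ι ℝ) (U : Submodule ℝ (ι → ℝ)) : Prop :=
  ∀ y ∈ U, y ≠ 0 → 0 < y ⬝ᵥ (P *ᵥ y)

variable {P C : Matrix ι ι ℝ} {W : Submodule ℝ (ι → ℝ)} {x : ι → ℝ}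

theorem PosDefOn.exists_finrank_succ (hP : P.IsSymm) (hC : Function.Injective C.mulVec)
    (hCW : ∀ y ∈ W, C *ᵥ y ∈ W)
    (hmono : ∀ y ∈ W, y ⬝ᵥ (P *ᵥ y) ≤ (C *ᵥ y) ⬝ᵥ (P *ᵥ (C *ᵥ y)))
    (hxW : x ∈ W) (hxP : ∀ y ∈ W, y ⬝ᵥ (P *ᵥ x) = 0)
    (hpos : 0 < (C *ᵥ x) ⬝ᵥ (P *ᵥ (C *ᵥ x)))
    {U : Submodule ℝ (ι → ℝ)} (hUW : U ≤ W) (hU : PosDefOn P U) :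
    ∃ U' ≤ W, Module.finrank ℝ U' = Module.finrank ℝ U + 1 ∧ PosDefOn P U' := by
  have hx0 : x ≠ 0 := by rintro rfl; simp at hpos
  have hxU : x ∉ U := fun h => (hU x h hx0).ne' (hxP x hxW)
  have hU'W : U ⊔ ℝ ∙ x ≤ W := sup_le hUW ((Submodule.span_singleton_le_iff_mem _ _).2 hxW)
  have hsplit : ∀ u ∈ U, ∀ c : ℝ, (u + c • x) ⬝ᵥ (P *ᵥ (u + c • x)) = u ⬝ᵥ (P *ᵥ u) := by
    intro u hu c
    have hxPu : x ⬝ᵥ (P *ᵥ u) = 0 := by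
      rw [← hP.eq, dotProduct_transpose_mulVec, hxP u (hUW hu)]
    simp only [mulVec_add, mulVec_smul, add_dotProduct, dotProduct_add, smul_dotProduct,
      dotProduct_smul, hxPu, hxP u (hUW hu), hxP x hxW, smul_zero, add_zero]
  have hCU' : ∀ y ∈ U ⊔ ℝ ∙ x, y ≠ 0 → 0 < (C *ᵥ y) ⬝ᵥ (P *ᵥ (C *ᵥ y)) := by
    intro y hy hy0
    obtain ⟨u, hu, v, hv, rfl⟩ := Submodule.mem_sup.1 hy
    obtain ⟨c, rfl⟩ := Submodule.mem_span_singleton.1 hv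
    by_cases hu0 : u = 0
    · subst hu0
      have hc : c ≠ 0 := by rintro rfl; simp at hy0
      simp only [zero_add, mulVec_smul, smul_dotProduct, dotProduct_smul, smul_eq_mul] at hy0 ⊢
      rw [← mul_assoc]
      exact mul_pos (mul_self_pos.2 hc) hpos
    · calc 0 < u ⬝ᵥ (P *ᵥ u) := hU u hu hu0
        _ = (u + c • x) ⬝ᵥ (P *ᵥ (u + c • x)) := (hsplit u hu c).symm
        _ ≤ _ := hmono _ (hU'W hy)
  refine ⟨(U ⊔ ℝ ∙ x).map C.mulVecLin, ?_, ?_, ?_⟩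
  · rintro _ ⟨y, hy, rfl⟩
    exact hCW y (hU'W hy)
  · rw [← (Submodule.equivMapOfInjective _ hC _).finrank_eq,
      Submodule.finrank_sup_span_singleton hxU]
  · rintro _ ⟨y, hy, rfl⟩ hz
    exact hCU' y hy (by rintro rfl; simp at hz)

theorem exists_mem_dotProduct_mulVec_ne_zero_of_pos (hP : P.IsSymm)
    (hC : Function.Injective C.mulVec) (hCW : ∀ y ∈ W, C *ᵥ y ∈ W)
    (hmono : ∀ y ∈ W, y ⬝ᵥ (P *ᵥ y) ≤ (C *ᵥ y) ⬝ᵥ (P *ᵥ (C *ᵥ y)))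
    (hxW : x ∈ W) (hpos : 0 < (C *ᵥ x) ⬝ᵥ (P *ᵥ (C *ᵥ x))) :
    ∃ y ∈ W, y ⬝ᵥ (P *ᵥ x) ≠ 0 := by
  by_contra! hxP
  have hgrow : ∀ d : ℕ, ∃ U ≤ W, Module.finrank ℝ U = d ∧ PosDefOn P U := by
    intro d
    induction d with
    | zero => exact ⟨⊥, bot_le, finrank_bot ℝ _, fun y hy hy0 => absurd hy hy0⟩
    | succ d ih =>
      obtain ⟨U, hUW, rfl, hU⟩ := ih
      exact hU.exists_finrank_succ hP hC hCW hmono hxW hxP hpos hUW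
  obtain ⟨U, -, hU, -⟩ := hgrow (Fintype.card ι + 1)
  have := U.finrank_le
  rw [Module.finrank_fintype_fun_eq_card, hU] at this
  omega

end Inertia

namespace IsSteinSol

variable {ι κ : Type*} [Fintype ι] [DecidableEq ι] [Fintype κ] [DecidableEq κ]
  {A : Matrix ι ι ℝ} {B : Matrix ι κ ℝ} {R : Matrix κ κ ℝ} {P : Matrix ι ι ℝ}

theorem dotProduct_mulVec_transpose (hP : IsSteinSol A B R P) (y : ι → ℝ) :
    (Aᵀ *ᵥ y) ⬝ᵥ (P *ᵥ (Aᵀ *ᵥ y)) = y ⬝ᵥ (P *ᵥ y) + (Bᵀ *ᵥ y) ⬝ᵥ (R⁻¹ *ᵥ (Bᵀ *ᵥ y)) := by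
  rw [mulVec_dotProduct_mulVec_mulVec, mulVec_dotProduct_mulVec_mulVec, transpose_transpose,
    transpose_transpose, sub_eq_iff_eq_add.1 hP.2, add_mulVec, dotProduct_add, add_comm]

theorem dotProduct_mulVec_le_pow (hP : IsSteinSol A B R P) (hR : R.PosDef) (k : ℕ)
    (y : ι → ℝ) : y ⬝ᵥ (P *ᵥ y) ≤ ((Aᵀ ^ k) *ᵥ y) ⬝ᵥ (P *ᵥ ((Aᵀ ^ k) *ᵥ y)) := by
  induction k with
  | zero => simp
  | succ k ih =>
    rw [pow_succ', ← mulVec_mulVec, hP.dotProduct_mulVec_transpose]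
    have := hR.inv.posSemidef.dotProduct_mulVec_nonneg (Bᵀ *ᵥ ((Aᵀ ^ k) *ᵥ y))
    rw [star_trivial] at this
    linarith

theorem eq_zero_of_projected_mulVec_eq_zero (hP : IsSteinSol A B R P) (hA : IsUnit A)
    (hreach : Reachable A B) (hR : R.PosDef) {E : Matrix ι ι ℝ} (hE : E.IsSymm)
    (hEA : AInvariant Aᵀ (LinearMap.ker E.mulVecLin)) {x : ι → ℝ} (hx : (1 - E) *ᵥ x = x)
    (hMx : ((1 - E) * P * (1 - E)) *ᵥ x = 0) : x = 0 := by
  by_contra hx0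
  obtain ⟨j, hj⟩ := hreach.exists_mulVec_pow_ne_zero hx0
  have hxW : x ∈ LinearMap.ker E.mulVecLin := one_sub_mulVec_eq_self_iff.1 hx
  have hxP : ∀ y ∈ LinearMap.ker E.mulVecLin, y ⬝ᵥ (P *ᵥ x) = 0 := by
    intro y (hy : E *ᵥ y = 0)
    rw [← hx, ← one_sub_mulVec_eq_self_iff.2 hy, mulVec_dotProduct_mulVec_mulVec, transpose_sub,
      transpose_one, hE.eq, hMx, dotProduct_zero]
  have hpos : 0 < ((Aᵀ ^ (j + 1)) *ᵥ x) ⬝ᵥ (P *ᵥ ((Aᵀ ^ (j + 1)) *ᵥ x)) := by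
    rw [pow_succ', ← mulVec_mulVec, hP.dotProduct_mulVec_transpose]
    have := hR.inv.dotProduct_mulVec_pos hj
    rw [star_trivial] at this
    linarith [hP.dotProduct_mulVec_le_pow hR j x, hxP x hxW]
  have hAt : Function.Injective (Aᵀ ^ (j + 1)).mulVec :=
    mulVec_injective_iff_isUnit.2 (((isUnit_transpose A).2 hA).pow _)
  obtain ⟨y, hyW, hy⟩ := exists_mem_dotProduct_mulVec_ne_zero_of_pos hP.1 hAt (hEA.pow _)
    (fun y _ => hP.dotProduct_mulVec_le_pow hR _ y) hxW hpos
  exact hy (hxP y hyW)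

end IsSteinSol

theorem transpose_mul_eq_mul_inv_mul_one_add {α n : Type*} [CommRing α] [Fintype n]
    [DecidableEq n] {A P Q E : Matrix n n α} (hA : IsUnit A) (hP : P.IsSymm) (hQ : Q.IsSymm)
    (hE : E.IsSymm) (hQPE : Q * P * (1 - E) = 1 - E) (hQAE : Q * A * E = 0)
    (hQAinvE : Q * A⁻¹ * E = 0) :
    Aᵀ * Q = Q * A⁻¹ * (1 + (A * P * Aᵀ - P) * Q) := by
  have hEAtQ : E * (Aᵀ * Q) = 0 := by
    rw [← hE.eq, ← hQ.eq, ← transpose_mul, ← transpose_mul, hQAE, transpose_zero]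
  have hEPQ : (1 - E) * (P * Q) = 1 - E := by
    simpa only [transpose_mul, transpose_sub, transpose_one, hE.eq, hP.eq, hQ.eq,
      Matrix.mul_assoc] using congrArg transpose hQPE
  have hQPAtQ : Q * P * Aᵀ * Q = Aᵀ * Q :=
    calc Q * P * Aᵀ * Q = Q * P * ((1 - E) * (Aᵀ * Q) + E * (Aᵀ * Q)) := by
          rw [← Matrix.add_mul, sub_add_cancel, Matrix.one_mul, Matrix.mul_assoc]
      _ = (1 - E) * (Aᵀ * Q) := by rw [hEAtQ, add_zero, ← Matrix.mul_assoc, hQPE]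
      _ = Aᵀ * Q := by rw [Matrix.sub_mul, Matrix.one_mul, hEAtQ, sub_zero]
  have hQAinvPQ : Q * A⁻¹ * P * Q = Q * A⁻¹ :=
    calc Q * A⁻¹ * P * Q = Q * A⁻¹ * ((1 - E) * (P * Q) + E * (P * Q)) := by
          rw [← Matrix.add_mul, sub_add_cancel, Matrix.one_mul, Matrix.mul_assoc]
      _ = Q * A⁻¹ := by
          rw [hEPQ, Matrix.mul_add, ← Matrix.mul_assoc _ E, hQAinvE, Matrix.zero_mul, add_zero,
            Matrix.mul_sub, hQAinvE, Matrix.mul_one, sub_zero]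
  calc Aᵀ * Q = Q * A⁻¹ + (Q * P * Aᵀ * Q - Q * A⁻¹ * P * Q) := by
        rw [hQPAtQ, hQAinvPQ, add_sub_cancel]
    _ = Q * A⁻¹ + (Q * (A⁻¹ * A) * P * Aᵀ * Q - Q * A⁻¹ * P * Q) := by
        rw [nonsing_inv_mul A ((isUnit_iff_isUnit_det A).1 hA), Matrix.mul_one]
    _ = Q * A⁻¹ * (1 + (A * P * Aᵀ - P) * Q) := by
        simp only [Matrix.mul_add, Matrix.mul_sub, Matrix.sub_mul, Matrix.mul_one,
          Matrix.mul_assoc]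

theorem IsHARESol.of_transpose_mul_eq {n m : Type*} [Fintype n] [DecidableEq n] [Fintype m]
    [DecidableEq m] {A : Matrix n n ℝ} {B : Matrix n m ℝ} {R : Matrix m m ℝ} {Q : Matrix n n ℝ}
    (hA : IsUnit A) (hR : IsUnit R) (hQ : Q.IsSymm)
    (h : Aᵀ * Q = Q * A⁻¹ * (1 + B * R⁻¹ * (Bᵀ * Q))) : IsHARESol A B R Q := by
  set K := 1 + B * R⁻¹ * (Bᵀ * Q) with hKdef
  have hK : IsUnit K := by
    rw [isUnit_iff_isUnit_det, isUnit_iff_ne_zero]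
    intro hdet
    obtain ⟨v, hv0, hKv⟩ := exists_mulVec_eq_zero_iff.2 hdet
    have hQv : Q *ᵥ v = 0 := by
      apply mulVec_injective_iff_isUnit.2 ((isUnit_transpose A).2 hA)
      rw [mulVec_mulVec, h, ← mulVec_mulVec, hKv, mulVec_zero, mulVec_zero]
    refine hv0 ?_
    simpa only [hKdef, add_mulVec, one_mulVec, ← mulVec_mulVec, hQv, mulVec_zero, add_zero]
      using hKv
  have hRdet := (isUnit_iff_isUnit_det R).1 hR
  have hT : IsUnit (R + Bᵀ * Q * B) := by
    rw [isUnit_iff_isUnit_det, det_add_mul _ _ hRdet]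
    exact hRdet.mul ((isUnit_iff_isUnit_det K).1 hK)
  -- Woodbury identity
  have hKinv : K⁻¹ = 1 - B * (R + Bᵀ * Q * B)⁻¹ * (Bᵀ * Q) := by
    have hRR := nonsing_inv_nonsing_inv R hRdet
    have := add_mul_mul_inv_eq_sub 1 B R⁻¹ (Bᵀ * Q) isUnit_one (isUnit_nonsing_inv_iff.2 hR)
      (by rwa [hRR, inv_one, Matrix.mul_one])
    rwa [hRR, inv_one, Matrix.mul_one, Matrix.one_mul, Matrix.mul_one] at this
  refine ⟨hQ, hT, ?_⟩
  calc Q = Q * A⁻¹ * K * K⁻¹ * A := by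
        rw [Matrix.mul_assoc _ K, mul_nonsing_inv _ ((isUnit_iff_isUnit_det K).1 hK),
          Matrix.mul_one, Matrix.mul_assoc, nonsing_inv_mul _ ((isUnit_iff_isUnit_det A).1 hA),
          Matrix.mul_one]
    _ = Aᵀ * Q * A - Aᵀ * Q * B * (R + Bᵀ * Q * B)⁻¹ * (Bᵀ * Q * A) := by
        rw [← h, hKinv]
        simp only [Matrix.mul_sub, Matrix.sub_mul, Matrix.mul_one, Matrix.mul_assoc]

theorem pseudoinverse_of_projected_Stein_solution_solves_HARE
    {n m : ℕ} (A : Matrix (Fin n) (Fin n) ℝ) (B : Matrix (Fin n) (Fin m) ℝ)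
    (R : Matrix (Fin m) (Fin m) ℝ)
    (hA : IsUnit A) (hreach : Reachable A B) (hR : R.PosDef)
    (P : Matrix (Fin n) (Fin n) ℝ) (hP : IsSteinSol A B R P)
    (S : Submodule ℝ (Fin n → ℝ)) (hS : AInvariant A S)
    (Pr : Matrix (Fin n) (Fin n) ℝ) (hPr : IsOrthProjOnto S Pr)
    (Q : Matrix (Fin n) (Fin n) ℝ)
    (hQ : IsMPPseudoinverse ((1 - Pr) * P * (1 - Pr)) Q) :
    IsHARESol A B R Q := by
  obtain ⟨hPrT, hPrPr, hPrS⟩ := hPr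
  set N := 1 - Pr
  have hNN : N * N = N := (IsIdempotentElem.one_sub hPrPr).eq
  have hNT : N.IsSymm := by simp only [IsSymm, N, transpose_sub, transpose_one, hPrT.eq]
  have hM : (N * P * N).IsSymm := by
    simp only [IsSymm, transpose_mul, hNT.eq, hP.1.eq, Matrix.mul_assoc]
  have hQM : Q * (N * P * N) = N :=
    hQ.mul_eq_of_injOn hM hNN (by simp only [← Matrix.mul_assoc, hNN])
      (by simp only [Matrix.mul_assoc, hNN]) fun _ => hP.eq_zero_of_projected_mulVec_eq_zero
        hA hreach hR hPrT (hS.transpose_ker ⟨hPrT, hPrPr, hPrS⟩)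
  have hQT := hQ.isSymm hM
  have hMQ : N * P * N * Q = N := by
    simpa only [transpose_mul, hM.eq, hQT.eq, hNT.eq] using congrArg transpose hQM
  have hQN : Q * N = Q := by conv_rhs => rw [← hQ.2.1, Matrix.mul_assoc, hMQ]
  have hQPN : Q * P * N = N :=
    calc Q * P * N = Q * N * P * N := by rw [hQN]
      _ = N := by simpa only [Matrix.mul_assoc] using hQM
  have hQE : ∀ X, N * X * Pr = 0 → Q * X * Pr = 0 := fun X hX => by
    rw [← hQN, Matrix.mul_assoc Q N X, Matrix.mul_assoc Q, hX, Matrix.mul_zero]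
  refine IsHARESol.of_transpose_mul_eq hA hR.isUnit hQT ?_
  have := transpose_mul_eq_mul_inv_mul_one_add hA hP.1 hQT hPrT hQPN
    (hQE _ (hS.one_sub_mul_mul_eq_zero hPrPr hPrS))
    (hQE _ ((hS.inv hA).one_sub_mul_mul_eq_zero hPrPr hPrS))
  rwa [hP.2, Matrix.mul_assoc (B * R⁻¹)] at this
end

section
/- Let A ∈ ℝ^{n×n} be block lower triangular, A = [[A₁, 0], [A₂₁, A₂]] with A₁ ∈ ℝ^{k×k}, let B = [B₁; B₂] ∈ ℝ^{n×m} be partitioned conformably, and let R = Rᵀ ∈ ℝ^{m×m}. Suppose Q₁ ∈ ℝ^{k×k} is a symmetric matrix with R + B₁ᵀQ₁B₁ invertible satisfying the reduced homogeneous algebraic Riccati equation Q₁ = A₁ᵀQ₁A₁ − A₁ᵀQ₁B₁(R + B₁ᵀQ₁B₁)^{−1}B₁ᵀQ₁A₁. Then the block matrix Q := [[Q₁, 0], [0, 0]] ∈ ℝ^{n×n} is symmetric, R + BᵀQB is invertible, and Q satisfies Q = AᵀQA − AᵀQB(R + BᵀQB)^{−1}BᵀQA. -/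
open Matrix Polynomial

/-! Let `P = [I 0]` be the projection onto the first block of coordinates. Block lower
triangularity says `P A = A₁ P`, and `P B = B₁`, while `Q = Pᵀ Q₁ P`. Hence every term of the
Riccati equation for `(A, B, Q)` is `Pᵀ (·) P` applied to the corresponding term for
`(A₁, B₁, Q₁)`; in particular `R + BᵀQB = R + B₁ᵀQ₁B₁`. -/

theorem IsHARESol.transpose_mul_mul {n n₁ m : Type*} [Fintype n] [DecidableEq n]
    [Fintype n₁] [DecidableEq n₁] [Fintype m] [DecidableEq m]
    {A : Matrix n n ℝ} {B : Matrix n m ℝ} {A₁ : Matrix n₁ n₁ ℝ} {B₁ : Matrix n₁ m ℝ}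
    {R : Matrix m m ℝ} {Q₁ : Matrix n₁ n₁ ℝ} (P : Matrix n₁ n ℝ)
    (hPA : P * A = A₁ * P) (hPB : P * B = B₁) (h : IsHARESol A₁ B₁ R Q₁) :
    IsHARESol A B R (Pᵀ * Q₁ * P) := by
  obtain ⟨hsym, hunit, heq⟩ := h
  have hAP : Aᵀ * Pᵀ = Pᵀ * A₁ᵀ := by rw [← transpose_mul, hPA, transpose_mul]
  have hBP : Bᵀ * Pᵀ = B₁ᵀ := by rw [← transpose_mul, hPB]
  have hBQB : Bᵀ * (Pᵀ * Q₁ * P) * B = B₁ᵀ * Q₁ * B₁ := by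
    simp only [← Matrix.mul_assoc, hBP]; simp only [Matrix.mul_assoc, hPB]
  have hAQB : Aᵀ * (Pᵀ * Q₁ * P) * B = Pᵀ * (A₁ᵀ * Q₁ * B₁) := by
    simp only [← Matrix.mul_assoc, hAP]; simp only [Matrix.mul_assoc, hPB]
  have hBQA : Bᵀ * (Pᵀ * Q₁ * P) * A = B₁ᵀ * Q₁ * A₁ * P := by
    simp only [← Matrix.mul_assoc, hBP]; simp only [Matrix.mul_assoc, hPA]
  have hAQA : Aᵀ * (Pᵀ * Q₁ * P) * A = Pᵀ * (A₁ᵀ * Q₁ * A₁) * P := by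
    simp only [← Matrix.mul_assoc, hAP]; simp only [Matrix.mul_assoc, hPA]
  refine ⟨?_, hBQB ▸ hunit, ?_⟩
  · simp only [IsSymm, transpose_mul, transpose_transpose, hsym.eq, Matrix.mul_assoc]
  · rw [hBQB, hAQB, hBQA, hAQA]
    conv_lhs => rw [heq]
    simp only [Matrix.mul_sub, Matrix.sub_mul, Matrix.mul_assoc]

def projFstBlock (n₁ n₂ : Type*) [DecidableEq n₁] : Matrix n₁ (n₁ ⊕ n₂) ℝ :=
  fromCols 1 0

section projFstBlock

variable {n₁ n₂ : Type*} [Fintype n₁] [DecidableEq n₁]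

theorem projFstBlock_transpose_mul_mul (Q₁ : Matrix n₁ n₁ ℝ) :
    (projFstBlock n₁ n₂)ᵀ * Q₁ * projFstBlock n₁ n₂ = fromBlocks Q₁ 0 0 0 := by
  rw [projFstBlock, transpose_fromCols, fromRows_mul, mul_fromCols]
  simp only [transpose_one, transpose_zero, Matrix.one_mul, Matrix.zero_mul, Matrix.mul_one,
    Matrix.mul_zero]
  rw [← fromRows_zero, fromCols_fromRows_eq_fromBlocks]

theorem projFstBlock_mul_fromBlocks [Fintype n₂] (A₁ : Matrix n₁ n₁ ℝ) (A₂₁ : Matrix n₂ n₁ ℝ)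
    (A₂ : Matrix n₂ n₂ ℝ) :
    projFstBlock n₁ n₂ * fromBlocks A₁ 0 A₂₁ A₂ = A₁ * projFstBlock n₁ n₂ := by
  rw [projFstBlock, fromCols_mul_fromBlocks, mul_fromCols]
  simp

theorem projFstBlock_mul_fromRows [Fintype n₂] {m : Type*} (B₁ : Matrix n₁ m ℝ)
    (B₂ : Matrix n₂ m ℝ) :
    projFstBlock n₁ n₂ * fromRows B₁ B₂ = B₁ := by
  simp [projFstBlock, fromCols_mul_fromRows]

end projFstBlock

theorem block_extension_of_reduced_HARE_solution_general
    {k l m : ℕ} (A₁ : Matrix (Fin k) (Fin k) ℝ) (A₂₁ : Matrix (Fin l) (Fin k) ℝ)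
    (A₂ : Matrix (Fin l) (Fin l) ℝ) (B₁ : Matrix (Fin k) (Fin m) ℝ)
    (B₂ : Matrix (Fin l) (Fin m) ℝ) (R : Matrix (Fin m) (Fin m) ℝ)
    (Q₁ : Matrix (Fin k) (Fin k) ℝ) (hQ₁sym : Q₁.IsSymm)
    (hu : IsUnit (R + B₁ᵀ * Q₁ * B₁))
    (heq : Q₁ = A₁ᵀ * Q₁ * A₁ -
      A₁ᵀ * Q₁ * B₁ * (R + B₁ᵀ * Q₁ * B₁)⁻¹ * (B₁ᵀ * Q₁ * A₁)) :
    IsHARESol (Matrix.fromBlocks A₁ 0 A₂₁ A₂) (Matrix.fromRows B₁ B₂) R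
      (Matrix.fromBlocks Q₁ 0 0 0) := by
  rw [← projFstBlock_transpose_mul_mul (n₂ := Fin l)]
  exact IsHARESol.transpose_mul_mul _ (projFstBlock_mul_fromBlocks A₁ A₂₁ A₂)
    (projFstBlock_mul_fromRows B₁ B₂) ⟨hQ₁sym, hu, heq⟩

theorem block_extension_of_reduced_HARE_solution
    {k l m : ℕ} (A₁ : Matrix (Fin k) (Fin k) ℝ) (A₂₁ : Matrix (Fin l) (Fin k) ℝ)
    (A₂ : Matrix (Fin l) (Fin l) ℝ) (B₁ : Matrix (Fin k) (Fin m) ℝ)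
    (B₂ : Matrix (Fin l) (Fin m) ℝ) (R : Matrix (Fin m) (Fin m) ℝ)
    (hRsym : R.IsSymm)
    (Q₁ : Matrix (Fin k) (Fin k) ℝ) (hQ₁sym : Q₁.IsSymm)
    (hu : IsUnit (R + B₁ᵀ * Q₁ * B₁))
    (heq : Q₁ = A₁ᵀ * Q₁ * A₁ -
      A₁ᵀ * Q₁ * B₁ * (R + B₁ᵀ * Q₁ * B₁)⁻¹ * (B₁ᵀ * Q₁ * A₁)) :
    IsHARESol (Matrix.fromBlocks A₁ 0 A₂₁ A₂) (Matrix.fromRows B₁ B₂) R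
      (Matrix.fromBlocks Q₁ 0 0 0) :=
  block_extension_of_reduced_HARE_solution_general A₁ A₂₁ A₂ B₁ B₂ R Q₁ hQ₁sym hu heq
end

section
/- Let A ∈ ℝ^{n×n} be block lower triangular, A = [[A₁, 0], [A₂₁, A₂]] with A₁ ∈ ℝ^{k×k}, let B = [B₁; B₂] ∈ ℝ^{n×m} be partitioned conformably, let R = Rᵀ ∈ ℝ^{m×m} be invertible, and suppose A₂ is invertible. Assume that A₂ is unmixed and that no complex eigenvalue of A₁ is the reciprocal of a complex eigenvalue of A₂ (i.e. σ(A₁) ∩ σ(A₂^{−1}) = ∅ over ℂ). If P₁ ∈ ℝ^{k×k} is a symmetric solution of the reduced Stein equation A₁ P₁ A₁ᵀ − P₁ = B₁ R^{−1} B₁ᵀ, then there exist matrices X₁₂ ∈ ℝ^{k×(n−k)} and X₂ = X₂ᵀ ∈ ℝ^{(n−k)×(n−k)} such that P := [[P₁, X₁₂], [X₁₂ᵀ, X₂]] is a symmetric solution of the full Stein equation A P Aᵀ − P = B R^{−1} Bᵀ. -/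
/-!
Write `P` in block form. For lower block triangular `A`, the `(1,1)` block of the Stein equation
is the reduced equation, the `(1,2)` block is a Stein equation `A₁ X₁₂ A₂ᵀ - X₁₂ = C` for `X₁₂`,
and the `(2,2)` block is `A₂ X₂ A₂ᵀ - X₂ = D` with `D` symmetric. The operator `Y ↦ A Y Mᵀ - Y`
is injective, hence bijective, when `M` is invertible and no eigenvalue of `A` is the reciprocal
of one of `M`: then `A Y Mᵀ = Y` is the Sylvester equation `A Y = Y M⁻ᵀ` with disjoint spectra,
which forces `Y = 0` because `χ_A(M⁻ᵀ)` is invertible. Since `X₂ᵀ` solves the same equation,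
uniqueness makes `X₂` symmetric.
-/

open Matrix Polynomial

namespace Matrix

section CommRing

variable {R S : Type*} [CommRing R] [CommRing S] {m n : Type*} [Fintype m] [Fintype n]

@[simps]
def steinMap (A : Matrix m m R) (M : Matrix n n R) : Matrix m n R →ₗ[R] Matrix m n R where
  toFun Y := A * Y * Mᵀ - Y
  map_add' Y Z := by simp only [Matrix.mul_add, Matrix.add_mul]; abel
  map_smul' c Y := by simp only [Matrix.mul_smul, Matrix.smul_mul, smul_sub, RingHom.id_apply]

theorem steinMap_transpose (A Y : Matrix n n R) : steinMap A A Yᵀ = (steinMap A A Y)ᵀ := by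
  simp only [steinMap_apply, transpose_sub, transpose_mul, transpose_transpose, Matrix.mul_assoc]

theorem steinMap_map (f : R →+* S) (A : Matrix m m R) (M : Matrix n n R) (Y : Matrix m n R) :
    steinMap (A.map f) (M.map f) (Y.map f) = (steinMap A M Y).map f := by
  rw [steinMap_apply, steinMap_apply, Matrix.map_sub f (map_sub f), Matrix.map_mul,
    Matrix.map_mul, transpose_map]

theorem IsSymm.of_steinMap_self {A X C : Matrix n n R} (hA : Function.Injective (steinMap A A))
    (hC : C.IsSymm) (hX : steinMap A A X = C) : X.IsSymm :=
  hA <| by rw [steinMap_transpose, hX, hC.eq]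

omit [Fintype m] in
theorem IsSymm.mul_mul_transpose {P : Matrix n n R} (hP : P.IsSymm) (A : Matrix m n R) :
    (A * P * Aᵀ).IsSymm := by
  rw [IsSymm, transpose_mul, transpose_mul, transpose_transpose, hP.eq, Matrix.mul_assoc]

omit [Fintype m] [Fintype n] in
theorem IsSymm.ext_toBlocks {α : Type*} {M N : Matrix (m ⊕ n) (m ⊕ n) α} (hM : M.IsSymm)
    (hN : N.IsSymm) (h₁₁ : M.toBlocks₁₁ = N.toBlocks₁₁) (h₁₂ : M.toBlocks₁₂ = N.toBlocks₁₂)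
    (h₂₂ : M.toBlocks₂₂ = N.toBlocks₂₂) : M = N := by
  have h₂₁ : M.toBlocks₂₁ = N.toBlocks₂₁ := by
    rw [← hM, ← hN]
    exact congr_arg (fun X => Xᵀ) h₁₂
  exact ext_iff_blocks.mpr ⟨h₁₁, h₁₂, h₂₁, h₂₂⟩

end CommRing

section Field

variable {K : Type*} [Field K] {m n : Type*} [Fintype m] [DecidableEq m] [Fintype n]
  [DecidableEq n]

theorem aeval_mul_eq_mul_aeval {A : Matrix m m K} {M : Matrix n n K} {Y : Matrix m n K}
    (h : A * Y = Y * M) (p : K[X]) : aeval A p * Y = Y * aeval M p := by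
  induction p using Polynomial.induction_on' with
  | add p q hp hq => rw [map_add, map_add, Matrix.add_mul, Matrix.mul_add, hp, hq]
  | monomial k a =>
    have hpow : A ^ k * Y = Y * M ^ k := by
      induction k with
      | zero => simp
      | succ k ih => rw [pow_succ, pow_succ, Matrix.mul_assoc, h, ← Matrix.mul_assoc, ih,
          Matrix.mul_assoc]
    simp only [aeval_monomial, Algebra.algebraMap_eq_smul_one, Matrix.smul_mul, Matrix.mul_smul,
      Matrix.one_mul, hpow]

theorem spectrum_transpose (M : Matrix n n K) : spectrum K Mᵀ = spectrum K M := by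
  ext μ
  rw [mem_spectrum_iff_isRoot_charpoly, mem_spectrum_iff_isRoot_charpoly, charpoly_transpose]

variable [IsAlgClosed K]

theorem eq_zero_of_mul_eq_mul_of_disjoint_spectrum {A : Matrix m m K} {M : Matrix n n K}
    (hAM : Disjoint (spectrum K A) (spectrum K M)) {Y : Matrix m n K} (h : A * Y = Y * M) :
    Y = 0 := by
  cases isEmpty_or_nonempty n
  · exact Subsingleton.elim _ _
  -- `χ_A(M)` is invertible by the spectral mapping theorem, and `Y χ_A(M) = χ_A(A) Y = 0`.
  have hunit : IsUnit (aeval M A.charpoly) := by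
    refine spectrum.isUnit_of_zero_notMem K fun h0 => ?_
    rw [spectrum.map_polynomial_aeval_of_nonempty _ _
      (spectrum.nonempty_of_isAlgClosed_of_finiteDimensional K M)] at h0
    obtain ⟨μ, hμM, hμA⟩ := h0
    exact hAM.notMem_of_mem_right hμM (mem_spectrum_iff_isRoot_charpoly.mpr hμA)
  have hY : Y * aeval M A.charpoly = 0 := by
    rw [← aeval_mul_eq_mul_aeval h, aeval_self_charpoly, Matrix.zero_mul]
  obtain ⟨u, hu⟩ := hunit
  rw [← hu] at hY
  simpa [Matrix.mul_assoc] using congr_arg (· * ((u⁻¹ : (Matrix n n K)ˣ) : Matrix n n K)) hY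

theorem steinMap_injective_of_isAlgClosed {A : Matrix m m K} {M : Matrix n n K}
    (hM : IsUnit M) (hAM : ∀ μ ∈ spectrum K A, ∀ ν ∈ spectrum K M, μ * ν ≠ 1) :
    Function.Injective (steinMap A M) := by
  obtain ⟨u, hu⟩ := (isUnit_transpose M).mpr hM
  have hdisj : Disjoint (spectrum K A) (spectrum K (↑u⁻¹ : Matrix n n K)) := by
    refine Set.disjoint_left.mpr fun μ hμA hμu => ?_
    have hμ : μ ≠ 0 := by
      rintro rfl
      exact spectrum.zero_notMem K (Units.isUnit u⁻¹) hμu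
    have hμM : μ⁻¹ ∈ spectrum K M := by
      rw [← spectrum_transpose, ← hu, ← spectrum.inv₀_mem_inv_iff, inv_inv]
      exact hμu
    exact hAM μ hμA μ⁻¹ hμM (mul_inv_cancel₀ hμ)
  rw [← LinearMap.ker_eq_bot, LinearMap.ker_eq_bot']
  intro Y hY
  rw [steinMap_apply, sub_eq_zero, ← hu] at hY
  refine eq_zero_of_mul_eq_mul_of_disjoint_spectrum hdisj ?_
  calc A * Y = A * Y * (u : Matrix n n K) * ((u⁻¹ : (Matrix n n K)ˣ) : Matrix n n K) := by
        rw [Matrix.mul_assoc _ (u : Matrix n n K), Units.mul_inv, Matrix.mul_one]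
    _ = _ := by rw [hY]

end Field

theorem steinMap_injective {K L : Type*} [Field K] [Field L] [IsAlgClosed L] [Algebra K L]
    {m n : Type*} [Fintype m] [DecidableEq m] [Fintype n] [DecidableEq n]
    {A : Matrix m m K} {M : Matrix n n K} (hM : IsUnit M)
    (hAM : ∀ μ ν : L, (A.map (algebraMap K L)).charpoly.IsRoot μ →
      (M.map (algebraMap K L)).charpoly.IsRoot ν → μ * ν ≠ 1) :
    Function.Injective (steinMap A M) := by
  set f := algebraMap K L
  have hL := steinMap_injective_of_isAlgClosed (hM.map f.mapMatrix)
    fun μ hμ ν hν => hAM μ ν (mem_spectrum_iff_isRoot_charpoly.mp hμ)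
      (mem_spectrum_iff_isRoot_charpoly.mp hν)
  rw [← LinearMap.ker_eq_bot, LinearMap.ker_eq_bot']
  intro Y hY
  refine Matrix.map_injective f.injective (?_ : Y.map f = (0 : Matrix m n K).map f)
  rw [Matrix.map_zero _ (map_zero f)]
  exact hL <| by rw [RingHom.mapMatrix_apply, steinMap_map, hY, map_zero,
    Matrix.map_zero _ (map_zero f)]

end Matrix

theorem isSteinSol_fromBlocks {ι κ μ : Type*} [Fintype ι] [DecidableEq ι] [Fintype κ]
    [DecidableEq κ] [Fintype μ] [DecidableEq μ] {A₁ : Matrix ι ι ℝ} {A₂₁ : Matrix κ ι ℝ}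
    {A₂ : Matrix κ κ ℝ} {B₁ : Matrix ι μ ℝ} {B₂ : Matrix κ μ ℝ} {R : Matrix μ μ ℝ}
    {P₁ : Matrix ι ι ℝ} {X₁₂ : Matrix ι κ ℝ} {X₂ : Matrix κ κ ℝ} (hR : R.IsSymm)
    (hP₁ : P₁.IsSymm) (hX₂ : X₂.IsSymm) (h₁₁ : steinMap A₁ A₁ P₁ = B₁ * R⁻¹ * B₁ᵀ)
    (h₁₂ : steinMap A₁ A₂ X₁₂ = B₁ * R⁻¹ * B₂ᵀ - A₁ * P₁ * A₂₁ᵀ)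
    (h₂₂ : steinMap A₂ A₂ X₂ =
      B₂ * R⁻¹ * B₂ᵀ - A₂₁ * P₁ * A₂₁ᵀ - (A₂₁ * X₁₂ * A₂ᵀ + (A₂₁ * X₁₂ * A₂ᵀ)ᵀ)) :
    IsSteinSol (fromBlocks A₁ 0 A₂₁ A₂) (fromRows B₁ B₂) R (fromBlocks P₁ X₁₂ X₁₂ᵀ X₂) := by
  have hP : (fromBlocks P₁ X₁₂ X₁₂ᵀ X₂).IsSymm := hP₁.fromBlocks rfl hX₂
  refine ⟨hP, ?_⟩
  have hQ := hR.inv.mul_mul_transpose (fromRows B₁ B₂)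
  rw [transpose_fromRows, fromRows_mul, fromRows_mul_fromCols] at hQ ⊢
  refine IsSymm.ext_toBlocks ((hP.mul_mul_transpose _).sub hP) hQ ?_ ?_ ?_
  all_goals simp only [fromBlocks_transpose, transpose_zero, fromBlocks_multiply, sub_eq_add_neg,
    fromBlocks_neg, fromBlocks_add, toBlocks_fromBlocks₁₁, toBlocks_fromBlocks₁₂,
    toBlocks_fromBlocks₂₂, Matrix.zero_mul, Matrix.mul_zero, add_zero, Matrix.add_mul]
  · rw [← sub_eq_add_neg, ← h₁₁, steinMap_apply]
  · calc _ = A₁ * P₁ * A₂₁ᵀ + steinMap A₁ A₂ X₁₂ := by rw [steinMap_apply]; abel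
      _ = _ := by rw [h₁₂]; abel
  · calc _ = A₂₁ * P₁ * A₂₁ᵀ + (A₂₁ * X₁₂ * A₂ᵀ + (A₂₁ * X₁₂ * A₂ᵀ)ᵀ) + steinMap A₂ A₂ X₂ := by
          simp only [steinMap_apply, transpose_mul, transpose_transpose, Matrix.mul_assoc]; abel
      _ = _ := by rw [h₂₂]; abel

theorem reduced_Stein_solution_extends_to_full_Stein_solution_general
    {k l m : ℕ} (A₁ : Matrix (Fin k) (Fin k) ℝ) (A₂₁ : Matrix (Fin l) (Fin k) ℝ)
    (A₂ : Matrix (Fin l) (Fin l) ℝ) (B₁ : Matrix (Fin k) (Fin m) ℝ)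
    (B₂ : Matrix (Fin l) (Fin m) ℝ) (R : Matrix (Fin m) (Fin m) ℝ)
    (hRsym : R.IsSymm) (hA₂ : IsUnit A₂) (hA₂unmixed : Unmixed A₂)
    (hspec : ∀ μ ν : ℂ, (A₁.map (algebraMap ℝ ℂ)).charpoly.IsRoot μ →
      (A₂.map (algebraMap ℝ ℂ)).charpoly.IsRoot ν → μ * ν ≠ 1)
    (P₁ : Matrix (Fin k) (Fin k) ℝ) (hP₁sym : P₁.IsSymm)
    (hred : A₁ * P₁ * A₁ᵀ - P₁ = B₁ * R⁻¹ * B₁ᵀ) :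
    ∃ (X₁₂ : Matrix (Fin k) (Fin l) ℝ) (X₂ : Matrix (Fin l) (Fin l) ℝ),
      X₂.IsSymm ∧
      IsSteinSol (Matrix.fromBlocks A₁ 0 A₂₁ A₂) (Matrix.fromRows B₁ B₂) R
        (Matrix.fromBlocks P₁ X₁₂ X₁₂ᵀ X₂) := by
  have h₁₂ := steinMap_injective hA₂ hspec
  have h₂₂ := steinMap_injective hA₂ hA₂unmixed
  obtain ⟨X₁₂, hX₁₂⟩ := LinearMap.injective_iff_surjective.mp h₁₂
    (B₁ * R⁻¹ * B₂ᵀ - A₁ * P₁ * A₂₁ᵀ)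
  set D := B₂ * R⁻¹ * B₂ᵀ - A₂₁ * P₁ * A₂₁ᵀ - (A₂₁ * X₁₂ * A₂ᵀ + (A₂₁ * X₁₂ * A₂ᵀ)ᵀ)
  have hD : D.IsSymm := ((hRsym.inv.mul_mul_transpose B₂).sub (hP₁sym.mul_mul_transpose A₂₁)).sub
    (isSymm_add_transpose_self _)
  obtain ⟨X₂, hX₂⟩ := LinearMap.injective_iff_surjective.mp h₂₂ D
  have hX₂sym : X₂.IsSymm := IsSymm.of_steinMap_self h₂₂ hD hX₂
  exact ⟨X₁₂, X₂, hX₂sym, isSteinSol_fromBlocks hRsym hP₁sym hX₂sym hred hX₁₂ hX₂⟩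

theorem reduced_Stein_solution_extends_to_full_Stein_solution
    {k l m : ℕ} (A₁ : Matrix (Fin k) (Fin k) ℝ) (A₂₁ : Matrix (Fin l) (Fin k) ℝ)
    (A₂ : Matrix (Fin l) (Fin l) ℝ) (B₁ : Matrix (Fin k) (Fin m) ℝ)
    (B₂ : Matrix (Fin l) (Fin m) ℝ) (R : Matrix (Fin m) (Fin m) ℝ)
    (hR : IsUnit R) (hRsym : R.IsSymm) (hA₂ : IsUnit A₂) (hA₂unmixed : Unmixed A₂)
    (hspec : ∀ μ ν : ℂ, (A₁.map (algebraMap ℝ ℂ)).charpoly.IsRoot μ →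
      (A₂.map (algebraMap ℝ ℂ)).charpoly.IsRoot ν → μ * ν ≠ 1)
    (P₁ : Matrix (Fin k) (Fin k) ℝ) (hP₁sym : P₁.IsSymm)
    (hred : A₁ * P₁ * A₁ᵀ - P₁ = B₁ * R⁻¹ * B₁ᵀ) :
    ∃ (X₁₂ : Matrix (Fin k) (Fin l) ℝ) (X₂ : Matrix (Fin l) (Fin l) ℝ),
      X₂.IsSymm ∧
      IsSteinSol (Matrix.fromBlocks A₁ 0 A₂₁ A₂) (Matrix.fromRows B₁ B₂) R
        (Matrix.fromBlocks P₁ X₁₂ X₁₂ᵀ X₂) :=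
  reduced_Stein_solution_extends_to_full_Stein_solution_general A₁ A₂₁ A₂ B₁ B₂ R hRsym hA₂
    hA₂unmixed hspec P₁ hP₁sym hred
end
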